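/- arXiv:2007.10386 — 2 statements merged into one kernel-verified Lean document; each statement's English description precedes it below -/
import Mathlib

section
/- Let m ≥ 1 be an integer, 0 < q < 1, |ξ| < π/2, 0 ≤ ρ < 1 and 0 ≤ γ < 1. If [ (1-ρ) sec ξ + ρ(1-γ) ] · q m / (1-q)^{m+1} ≤ 1 - γ, then the integral operator 𝒢_q^m(z) = ∫_0^z Θ_q^m(t)/t dt belongs to the class 𝒦(ξ, γ, ρ). -/
noncomputable section

open Complex Real Set

/-- The open unit disk in the complex plane. -/
def unitDisk : Set ℂ := Metric.ball 0 1

/-- The class 𝒜 of normalized analytic functions on the unit disk: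
`f` analytic on `𝔻`, `f 0 = 0`, `f' 0 = 1`. -/
def NormalizedAnalytic (f : ℂ → ℂ) : Prop :=
  AnalyticOn ℂ f unitDisk ∧ f 0 = 0 ∧ deriv f 0 = 1

/-- The spirallike class `𝒮(ξ, γ, ρ)`. -/
def SpiralS (ξ γ ρ : ℝ) (f : ℂ → ℂ) : Prop :=
  NormalizedAnalytic f ∧ Set.InjOn f unitDisk ∧
    ∀ z ∈ unitDisk, z ≠ 0 →
      (1 - (ρ : ℂ)) * f z + (ρ : ℂ) * z * deriv f z ≠ 0 ∧
      γ * Real.cos ξ <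
        (Complex.exp (Complex.I * ξ) * (z * deriv f z) /
          ((1 - (ρ : ℂ)) * f z + (ρ : ℂ) * z * deriv f z)).re

/-- The convex spirallike class `𝒦(ξ, γ, ρ)`. -/
def SpiralK (ξ γ ρ : ℝ) (f : ℂ → ℂ) : Prop :=
  NormalizedAnalytic f ∧ Set.InjOn f unitDisk ∧
    ∀ z ∈ unitDisk,
      deriv f z + (ρ : ℂ) * z * deriv (deriv f) z ≠ 0 ∧
      γ * Real.cos ξ <
        (Complex.exp (Complex.I * ξ) * (z * deriv (deriv f) z + deriv f z) /
          (deriv f z + (ρ : ℂ) * z * deriv (deriv f) z)).re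

/-- The spirallike class `𝒮(ξ, γ)`. -/
def SpiralS0 (ξ γ : ℝ) (f : ℂ → ℂ) : Prop :=
  NormalizedAnalytic f ∧ Set.InjOn f unitDisk ∧
    ∀ z ∈ unitDisk, z ≠ 0 →
      f z ≠ 0 ∧
      γ * Real.cos ξ <
        (Complex.exp (Complex.I * ξ) * (z * deriv f z) / f z).re

/-- The convex spirallike class `𝒦(ξ, γ)`. -/
def SpiralK0 (ξ γ : ℝ) (f : ℂ → ℂ) : Prop :=
  NormalizedAnalytic f ∧ Set.InjOn f unitDisk ∧
    ∀ z ∈ unitDisk,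
      deriv f z ≠ 0 ∧
      γ * Real.cos ξ <
        (Complex.exp (Complex.I * ξ) *
          (1 + z * deriv (deriv f) z / deriv f z)).re

/-- The class `ℛ^τ(ϑ, δ)`. -/
def ClassR (τ : ℂ) (ϑ δ : ℝ) (f : ℂ → ℂ) : Prop :=
  NormalizedAnalytic f ∧ Set.InjOn f unitDisk ∧
    ∀ z ∈ unitDisk,
      ‖(((1 - (ϑ : ℂ)) * (if z = 0 then 1 else f z / z) + (ϑ : ℂ) * deriv f z - 1) /
          (2 * τ * (1 - (δ : ℂ)) +
            (1 - (ϑ : ℂ)) * (if z = 0 then 1 else f z / z) + (ϑ : ℂ) * deriv f z - 1))‖ < 1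

/-- The Pascal distribution series
`Θ_q^m(z) = z + ∑_{n=2}^∞ C(n+m-2, m-1) q^(n-1) (1-q)^m z^n`. -/
def pascalTheta (m : ℕ) (q : ℝ) : ℂ → ℂ := fun z =>
  z + ∑' n : ℕ, ((n + m).choose (m - 1) : ℂ) * (q : ℂ) ^ (n + 1) * (1 - (q : ℂ)) ^ m * z ^ (n + 2)

/-- The integral operator `𝒢_q^m(z) = ∫_0^z Θ_q^m(t)/t dt
= z + ∑_{n=2}^∞ C(n+m-2, m-1) q^(n-1) (1-q)^m z^n / n`. -/
def pascalG (m : ℕ) (q : ℝ) : ℂ → ℂ := fun z =>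
  z + ∑' n : ℕ, ((n + m).choose (m - 1) : ℂ) * (q : ℂ) ^ (n + 1) * (1 - (q : ℂ)) ^ m *
    z ^ (n + 2) / ((n : ℂ) + 2)

/-!
Write `𝒢' z = 1 + ∑ cₙ z^(n+1)`, where `cₙ = P(X = n + 1) ≥ 0` for a Pascal variable `X`.
Hence `|𝒢' z - 1| ≤ |z| (1 - (1-q)^m) < 1`, so `𝒢 - id` is a contraction on the disk and `𝒢`
is injective, and `|𝒢'' z| ≤ ∑ (n+1) cₙ = E X = m q / (1 - q)`. The quotient in `𝒦(ξ, γ, ρ)`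
is `e^{iξ} (1 + w / D)` with `D = 𝒢' + ρ z 𝒢''` and `w = (1 - ρ) z 𝒢''`; its real part exceeds
`γ cos ξ` once `|w| < (1 - γ) cos ξ |D|`, and the two bounds reduce this to the hypothesis.
-/

open Metric

theorem Convex.injOn_of_norm_deriv_sub_one_le {𝕜 : Type*} [RCLike 𝕜] {f f' : 𝕜 → 𝕜} {s : Set 𝕜}
    {C : ℝ} (hs : Convex ℝ s) (hf : ∀ x ∈ s, HasDerivAt f (f' x) x)
    (bound : ∀ x ∈ s, ‖f' x - 1‖ ≤ C) (hC : C < 1) : InjOn f s := by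
  intro x hx y hy hxy
  have hlip := hs.norm_image_sub_le_of_norm_hasDerivWithin_le
    (fun z hz => ((hf z hz).sub (hasDerivAt_id z)).hasDerivWithinAt) bound hx hy
  have hsub : (f y - id y) - (f x - id x) = -(y - x) := by rw [hxy]; simp
  rw [Pi.sub_apply, Pi.sub_apply, hsub, norm_neg] at hlip
  have : ‖y - x‖ = 0 := by nlinarith [norm_nonneg (y - x)]
  exact (sub_eq_zero.1 (norm_eq_zero.1 this)).symm

section PowerSeries

variable {b : ℕ → ℂ}

theorem norm_tsum_mul_pow_le (k : ℕ) (hb : Summable fun n => ‖b n‖) {z : ℂ} (hz : ‖z‖ ≤ 1) :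
    ‖∑' n, b n * z ^ (n + k)‖ ≤ ‖z‖ ^ k * ∑' n, ‖b n‖ := by
  refine tsum_of_norm_bounded (hb.hasSum.mul_left (‖z‖ ^ k)) fun n => ?_
  calc ‖b n * z ^ (n + k)‖ = ‖b n‖ * ‖z‖ ^ n * ‖z‖ ^ k := by
        rw [norm_mul, norm_pow, pow_add, mul_assoc]
    _ ≤ ‖b n‖ * 1 * ‖z‖ ^ k := by gcongr; exact pow_le_one₀ (norm_nonneg z) hz
    _ = ‖z‖ ^ k * ‖b n‖ := by ring

theorem hasDerivAt_tsum_mul_pow (k : ℕ) (hb : Summable fun n => ‖b n‖ * ((n + k + 1 : ℕ) : ℝ))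
    {z : ℂ} (hz : ‖z‖ < 1) :
    HasDerivAt (fun w => ∑' n, b n * w ^ (n + k + 1))
      (∑' n, b n * ((n + k + 1 : ℕ) : ℂ) * z ^ (n + k)) z := by
  refine hasDerivAt_tsum_of_isPreconnected (g := fun n w => b n * w ^ (n + k + 1))
    (g' := fun n w => b n * ((n + k + 1 : ℕ) : ℂ) * w ^ (n + k)) hb isOpen_ball
    (convex_ball (0 : ℂ) 1).isPreconnected (fun n w _ => ?_) (fun n w hw => ?_)
    (mem_ball_self one_pos) ?_ (mem_ball_zero_iff.2 hz)
  · simpa [mul_assoc] using (hasDerivAt_pow (n + k + 1) w).const_mul (b n)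
  · have hw1 : ‖w‖ ^ (n + k) ≤ 1 := pow_le_one₀ (norm_nonneg w) (mem_ball_zero_iff.1 hw).le
    calc ‖b n * ((n + k + 1 : ℕ) : ℂ) * w ^ (n + k)‖
        = ‖b n‖ * ((n + k + 1 : ℕ) : ℝ) * ‖w‖ ^ (n + k) := by
          rw [norm_mul, norm_mul, norm_pow, Complex.norm_natCast]
      _ ≤ ‖b n‖ * ((n + k + 1 : ℕ) : ℝ) * 1 := by gcongr
      _ = ‖b n‖ * ((n + k + 1 : ℕ) : ℝ) := mul_one _
  · simp

end PowerSeries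

/-- `pascalCoeff m q n = P(X = n + 1)` for `X` Pascal-distributed with parameters `m, q`; it is the
coefficient of `z ^ (n + 1)` in `𝒢'`. -/
def pascalCoeff (m : ℕ) (q : ℝ) (n : ℕ) : ℝ :=
  (n + m).choose (m - 1) * q ^ (n + 1) * (1 - q) ^ m

theorem pascalCoeff_nonneg (m : ℕ) {q : ℝ} (hq0 : 0 ≤ q) (hq1 : q ≤ 1) (n : ℕ) :
    0 ≤ pascalCoeff m q n := by
  have : 0 ≤ 1 - q := sub_nonneg.2 hq1
  unfold pascalCoeff
  positivity

theorem hasSum_pascalCoeff {m : ℕ} (hm : 1 ≤ m) {q : ℝ} (hq : |q| < 1) :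
    HasSum (pascalCoeff m q) (1 - (1 - q) ^ m) := by
  obtain ⟨k, rfl⟩ : ∃ k, m = k + 1 := ⟨m - 1, by omega⟩
  have hq1 : 0 < 1 - q := by linarith [(abs_lt.1 hq).2]
  have hgeom := ((hasSum_nat_add_iff' 1).2
    (hasSum_choose_mul_geometric_of_norm_lt_one (𝕜 := ℝ) k hq)).mul_right ((1 - q) ^ (k + 1))
  have hcoeff : pascalCoeff (k + 1) q =
      fun n => ((n + 1 + k).choose k : ℝ) * q ^ (n + 1) * (1 - q) ^ (k + 1) := by
    ext n
    rw [pascalCoeff, Nat.add_sub_cancel, ← add_assoc, add_right_comm n k 1]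
  have hsum : (1 / (1 - q) ^ (k + 1) - ∑ i ∈ Finset.range 1, ((i + k).choose k : ℝ) * q ^ i) *
      (1 - q) ^ (k + 1) = 1 - (1 - q) ^ (k + 1) := by
    rw [Finset.sum_range_one, zero_add, Nat.choose_self, Nat.cast_one, pow_zero, mul_one]
    field_simp
  rwa [hcoeff, ← hsum]

theorem hasSum_pascalCoeff_mul_succ {m : ℕ} (hm : 1 ≤ m) {q : ℝ} (hq : |q| < 1) :
    HasSum (fun n => pascalCoeff m q n * (n + 1)) (m * q / (1 - q)) := by
  obtain ⟨k, rfl⟩ : ∃ k, m = k + 1 := ⟨m - 1, by omega⟩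
  have hq1 : 0 < 1 - q := by linarith [(abs_lt.1 hq).2]
  have hgeom := (hasSum_choose_mul_geometric_of_norm_lt_one (𝕜 := ℝ) (k + 1) hq).mul_left
    ((k + 1) * q * (1 - q) ^ (k + 1))
  have hcoeff : (fun n : ℕ => pascalCoeff (k + 1) q n * (n + 1)) =
      fun n => (k + 1) * q * (1 - q) ^ (k + 1) * ((n + (k + 1)).choose (k + 1) * q ^ n) := by
    ext n
    have hchoose :
        ((n + (k + 1)).choose (k + 1) : ℝ) * (k + 1) = (n + (k + 1)).choose k * (n + 1) := by
      exact_mod_cast Nat.choose_succ_right_eq (n + (k + 1)) k |>.trans (by congr 1; omega)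
    simp only [pascalCoeff, Nat.add_sub_cancel]
    linear_combination (q ^ (n + 1) * (1 - q) ^ (k + 1)) * hchoose.symm
  have hsum : (k + 1) * q * (1 - q) ^ (k + 1) * (1 / (1 - q) ^ (k + 1 + 1)) =
      ((k + 1 : ℕ) : ℝ) * q / (1 - q) := by
    push_cast
    field_simp
    ring
  rwa [hcoeff, ← hsum]

theorem norm_ofReal_pascalCoeff (m : ℕ) {q : ℝ} (hq0 : 0 ≤ q) (hq1 : q ≤ 1) (n : ℕ) :
    ‖(pascalCoeff m q n : ℂ)‖ = pascalCoeff m q n := by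
  rw [Complex.norm_real, Real.norm_of_nonneg (pascalCoeff_nonneg m hq0 hq1 n)]

theorem pascalG_eq (m : ℕ) (q : ℝ) :
    pascalG m q = fun z => z + ∑' n, (pascalCoeff m q n : ℂ) / (n + 2) * z ^ (n + 2) := by
  ext z
  simp only [pascalG, pascalCoeff]
  push_cast
  congr 1
  exact tsum_congr fun n => by ring

section PascalG

variable {m : ℕ} {q : ℝ}

theorem hasDerivAt_pascalG (hm : 1 ≤ m) (hq0 : 0 ≤ q) (hq1 : q < 1) {z : ℂ} (hz : ‖z‖ < 1) :
    HasDerivAt (pascalG m q) (1 + ∑' n, (pascalCoeff m q n : ℂ) * z ^ (n + 1)) z := by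
  have hsum : Summable fun n => ‖(pascalCoeff m q n : ℂ) / (n + 2)‖ * ((n + 1 + 1 : ℕ) : ℝ) := by
    refine (hasSum_pascalCoeff hm (abs_lt.2 ⟨by linarith, hq1⟩)).summable.congr fun n => ?_
    rw [norm_div, norm_ofReal_pascalCoeff m hq0 hq1.le, ← Nat.cast_ofNat, ← Nat.cast_add,
      Complex.norm_natCast]
    field_simp
  have htail :=
    hasDerivAt_tsum_mul_pow (b := fun n => (pascalCoeff m q n : ℂ) / (n + 2)) 1 hsum hz
  have hG : pascalG m q =
      id + fun w => ∑' n, (pascalCoeff m q n : ℂ) / (n + 2) * w ^ (n + 1 + 1) := by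
    rw [pascalG_eq]
    rfl
  rw [hG]
  refine ((hasDerivAt_id z).add htail).congr_deriv (congrArg _ (tsum_congr fun n => ?_))
  have h2 : (n : ℂ) + 2 ≠ 0 := by exact_mod_cast (n + 1).succ_ne_zero
  push_cast
  field_simp
  ring

theorem hasSum_norm_ofReal_pascalCoeff (hm : 1 ≤ m) (hq0 : 0 ≤ q) (hq1 : q < 1) :
    HasSum (fun n => ‖(pascalCoeff m q n : ℂ)‖) (1 - (1 - q) ^ m) := by
  simp only [norm_ofReal_pascalCoeff m hq0 hq1.le]
  exact hasSum_pascalCoeff hm (abs_lt.2 ⟨by linarith, hq1⟩)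

theorem hasSum_norm_ofReal_pascalCoeff_mul_succ (hm : 1 ≤ m) (hq0 : 0 ≤ q) (hq1 : q < 1) :
    HasSum (fun n => ‖(pascalCoeff m q n : ℂ) * (n + 1)‖) (m * q / (1 - q)) := by
  refine (hasSum_pascalCoeff_mul_succ hm (abs_lt.2 ⟨by linarith, hq1⟩)).congr_fun fun n => ?_
  rw [norm_mul, norm_ofReal_pascalCoeff m hq0 hq1.le, ← Nat.cast_add_one, Complex.norm_natCast,
    Nat.cast_add_one]

theorem hasDerivAt_deriv_pascalG (hm : 1 ≤ m) (hq0 : 0 ≤ q) (hq1 : q < 1) {z : ℂ}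
    (hz : ‖z‖ < 1) :
    HasDerivAt (deriv (pascalG m q)) (∑' n, (pascalCoeff m q n : ℂ) * (n + 1) * z ^ n) z := by
  have hsum : Summable fun n => ‖(pascalCoeff m q n : ℂ)‖ * ((n + 0 + 1 : ℕ) : ℝ) := by
    refine (hasSum_norm_ofReal_pascalCoeff_mul_succ hm hq0 hq1).summable.congr fun n => ?_
    rw [norm_mul, ← Nat.cast_add_one, Complex.norm_natCast]
  have hderiv : deriv (pascalG m q) =ᶠ[nhds z]
      fun w => 1 + ∑' n, (pascalCoeff m q n : ℂ) * w ^ (n + 0 + 1) := by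
    filter_upwards [isOpen_ball.mem_nhds (mem_ball_zero_iff.2 hz)] with w hw
    exact (hasDerivAt_pascalG hm hq0 hq1 (mem_ball_zero_iff.1 hw)).deriv
  refine ((hasDerivAt_tsum_mul_pow 0 hsum hz).const_add 1).congr_of_eventuallyEq hderiv
    |>.congr_deriv (tsum_congr fun n => ?_)
  simp

theorem norm_deriv_pascalG_sub_one_le (hm : 1 ≤ m) (hq0 : 0 ≤ q) (hq1 : q < 1) {z : ℂ}
    (hz : ‖z‖ < 1) : ‖deriv (pascalG m q) z - 1‖ ≤ ‖z‖ * (1 - (1 - q) ^ m) := by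
  have hsum := hasSum_norm_ofReal_pascalCoeff hm hq0 hq1
  rw [(hasDerivAt_pascalG hm hq0 hq1 hz).deriv, add_sub_cancel_left, ← hsum.tsum_eq,
    ← pow_one ‖z‖]
  exact norm_tsum_mul_pow_le 1 hsum.summable hz.le

theorem norm_deriv_deriv_pascalG_le (hm : 1 ≤ m) (hq0 : 0 ≤ q) (hq1 : q < 1) {z : ℂ}
    (hz : ‖z‖ < 1) : ‖deriv (deriv (pascalG m q)) z‖ ≤ m * q / (1 - q) := by
  have hsum := hasSum_norm_ofReal_pascalCoeff_mul_succ hm hq0 hq1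
  rw [(hasDerivAt_deriv_pascalG hm hq0 hq1 hz).deriv, ← hsum.tsum_eq]
  simpa using norm_tsum_mul_pow_le 0 hsum.summable hz.le

end PascalG

theorem pascal_moment_condition {m : ℕ} {q c ρ γ : ℝ} (hc : 0 < c) (hq1 : q < 1)
    (h : ((1 - ρ) * c⁻¹ + ρ * (1 - γ)) * (q * m / (1 - q) ^ (m + 1)) ≤ 1 - γ) :
    (1 - ρ) * (m * q / (1 - q)) ≤
      (1 - γ) * c * (1 - ((1 - (1 - q) ^ m) + ρ * (m * q / (1 - q)))) := by
  have hq : 0 < 1 - q := sub_pos.2 hq1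
  have hA : 0 < (1 - q) ^ m := pow_pos hq m
  have hscaled := mul_le_mul_of_nonneg_right h (mul_pos hA hc).le
  have hlhs : ((1 - ρ) * c⁻¹ + ρ * (1 - γ)) * (q * m / (1 - q) ^ (m + 1)) * ((1 - q) ^ m * c) =
      ((1 - ρ) + ρ * (1 - γ) * c) * (m * q / (1 - q)) := by
    rw [pow_succ]
    field_simp
  rw [hlhs] at hscaled
  linarith

theorem lt_re_exp_mul_div {ξ γ : ℝ} {N D : ℂ} (h : ‖N - D‖ < (1 - γ) * Real.cos ξ * ‖D‖) :
    D ≠ 0 ∧ γ * Real.cos ξ < (exp (I * ξ) * N / D).re := by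
  have hD : D ≠ 0 := by
    rintro rfl
    simp only [norm_zero, mul_zero] at h
    exact (norm_nonneg _).not_gt h
  refine ⟨hD, ?_⟩
  have hsplit : exp (I * ξ) * N / D = exp (I * ξ) + exp (I * ξ) * (N - D) / D := by
    field_simp
    ring
  have hre : (exp (I * ξ)).re = Real.cos ξ := by
    rw [mul_comm]
    exact exp_ofReal_mul_I_re ξ
  have hnorm : ‖exp (I * ξ) * (N - D) / D‖ < (1 - γ) * Real.cos ξ := by
    rw [norm_div, norm_mul, mul_comm I, norm_exp_ofReal_mul_I, one_mul,
      div_lt_iff₀ (norm_pos_iff.2 hD)]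
    exact h
  rw [hsplit, add_re, hre]
  linarith [neg_abs_le (exp (I * ξ) * (N - D) / D).re, abs_re_le_norm (exp (I * ξ) * (N - D) / D)]

theorem norm_sub_lt_of_norm_le {κ ρ S₀ S₁ : ℝ} {p s z : ℂ} (hκ : 0 < κ) (hρ0 : 0 ≤ ρ)
    (hρ1 : ρ ≤ 1) (hz : ‖z‖ < 1) (hp : ‖p - 1‖ ≤ ‖z‖ * S₀) (hs : ‖s‖ ≤ S₁)
    (hS : (1 - ρ) * S₁ ≤ κ * (1 - (S₀ + ρ * S₁))) :
    ‖z * s + p - (p + ρ * z * s)‖ < κ * ‖p + ρ * z * s‖ := by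
  have hzs : ‖z * s‖ ≤ ‖z‖ * S₁ := by
    rw [norm_mul]
    exact mul_le_mul_of_nonneg_left hs (norm_nonneg z)
  have hρzs : ‖(ρ : ℂ) * (z * s)‖ = ρ * ‖z * s‖ := by
    rw [norm_mul, Complex.norm_real, Real.norm_of_nonneg hρ0]
  have hnum : ‖z * s + p - (p + ρ * z * s)‖ = (1 - ρ) * ‖z * s‖ := by
    rw [show z * s + p - (p + ρ * z * s) = ((1 - ρ : ℝ) : ℂ) * (z * s) by push_cast; ring,
      norm_mul, Complex.norm_real, Real.norm_of_nonneg (sub_nonneg.2 hρ1)]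
  have hden : 1 - ‖z‖ * (S₀ + ρ * S₁) ≤ ‖p + ρ * z * s‖ := by
    have htri : ‖(1 : ℂ)‖ ≤ ‖p + ρ * z * s‖ + ‖p - 1‖ + ‖(ρ : ℂ) * (z * s)‖ := by
      calc ‖(1 : ℂ)‖ = ‖p + ρ * z * s - (p - 1) - ρ * (z * s)‖ := by ring_nf
        _ ≤ ‖p + ρ * z * s - (p - 1)‖ + ‖(ρ : ℂ) * (z * s)‖ := norm_sub_le _ _
        _ ≤ ‖p + ρ * z * s‖ + ‖p - 1‖ + ‖(ρ : ℂ) * (z * s)‖ := by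
          gcongr
          exact norm_sub_le _ _
    rw [norm_one, hρzs] at htri
    linarith [mul_le_mul_of_nonneg_left hzs hρ0]
  rw [hnum]
  linarith [mul_le_mul_of_nonneg_left hzs (sub_nonneg.2 hρ1),
    mul_le_mul_of_nonneg_left hS (norm_nonneg z), mul_le_mul_of_nonneg_left hden hκ.le,
    mul_pos hκ (sub_pos.2 hz)]

theorem stmt9_general (m : ℕ) (hm : 1 ≤ m) (q : ℝ) (hq0 : 0 < q) (hq1 : q < 1)
    (ξ ρ γ : ℝ) (hξ : |ξ| < π / 2) (hρ0 : 0 ≤ ρ) (hρ1 : ρ < 1)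
    (hγ1 : γ < 1)
    (h : ((1 - ρ) * (Real.cos ξ)⁻¹ + ρ * (1 - γ)) * (q * m / (1 - q) ^ (m + 1)) ≤ 1 - γ) :
    SpiralK ξ γ ρ (pascalG m q) := by
  have hcos : 0 < Real.cos ξ := Real.cos_pos_of_mem_Ioo (abs_lt.1 hξ)
  have hA : 0 < (1 - q) ^ m := pow_pos (sub_pos.2 hq1) m
  have hA1 : (1 - q) ^ m ≤ 1 := pow_le_one₀ (sub_pos.2 hq1).le (by linarith)
  have hderiv (z : ℂ) (hz : z ∈ unitDisk) :=
    hasDerivAt_pascalG hm hq0.le hq1 (mem_ball_zero_iff.1 hz)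
  have hderiv_sub_one (z : ℂ) (hz : z ∈ unitDisk) :=
    norm_deriv_pascalG_sub_one_le hm hq0.le hq1 (mem_ball_zero_iff.1 hz)
  have hderiv2 (z : ℂ) (hz : z ∈ unitDisk) :=
    norm_deriv_deriv_pascalG_le hm hq0.le hq1 (mem_ball_zero_iff.1 hz)
  refine ⟨⟨?_, by simp [pascalG_eq], by simp [(hderiv 0 (mem_ball_self one_pos)).deriv]⟩, ?_,
    fun z hz => ?_⟩
  · exact (DifferentiableOn.analyticOnNhd
      (fun z hz => (hderiv z hz).differentiableAt.differentiableWithinAt) isOpen_ball).analyticOn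
  · refine (convex_ball 0 1).injOn_of_norm_deriv_sub_one_le (C := 1 - (1 - q) ^ m)
      (fun z hz => (hderiv z hz).differentiableAt.hasDerivAt) (fun z hz => ?_) (by linarith)
    exact (hderiv_sub_one z hz).trans
      (mul_le_of_le_one_left (by linarith) (mem_ball_zero_iff.1 hz).le)
  · exact lt_re_exp_mul_div (norm_sub_lt_of_norm_le (mul_pos (sub_pos.2 hγ1) hcos) hρ0 hρ1.le
      (mem_ball_zero_iff.1 hz) (hderiv_sub_one z hz) (hderiv2 z hz)
      (pascal_moment_condition hcos hq1 h))

/-- Theorem 5, `𝒢_q^m ∈ 𝒦(ξ, γ, ρ)`. -/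
theorem stmt9 (m : ℕ) (hm : 1 ≤ m) (q : ℝ) (hq0 : 0 < q) (hq1 : q < 1)
    (ξ ρ γ : ℝ) (hξ : |ξ| < π / 2) (hρ0 : 0 ≤ ρ) (hρ1 : ρ < 1)
    (hγ0 : 0 ≤ γ) (hγ1 : γ < 1)
    (h : ((1 - ρ) * (Real.cos ξ)⁻¹ + ρ * (1 - γ)) * (q * m / (1 - q) ^ (m + 1)) ≤ 1 - γ) :
    SpiralK ξ γ ρ (pascalG m q) :=
  stmt9_general m hm q hq0 hq1 ξ ρ γ hξ hρ0 hρ1 hγ1 h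
end
end

section
/- Let m ≥ 2 be an integer, 0 < q < 1, |ξ| < π/2 and 0 ≤ γ < 1. If sec ξ · [ 1 - (1-q)^m ] + ((1-γ- sec ξ)/(q(m-1))) · [ (1-q) - (1-q)^m - q(m-1)(1-q)^m ] ≤ 1 - γ, then the integral operator 𝒢_q^m(z) = ∫_0^z Θ_q^m(t)/t dt belongs to the class 𝒮(ξ, γ). -/
noncomputable section

open Complex Real Set

/-!
If `f z = z + ∑ aₙ zⁿ⁺²` with `α = ∑ ‖aₙ‖` and `β = ∑ (n + 2) ‖aₙ‖`, then on the disk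
`‖f z‖ ≥ ‖z‖ - α ‖z‖²` and `‖z f' z - f z‖ ≤ (β - α) ‖z‖²`, so
`Re (e^{iξ} z f'/f) ≥ cos ξ - ‖z f' - f‖ / ‖f‖`, which exceeds `γ cos ξ` as soon as
`β - α ≤ (1 - γ) cos ξ (1 - α)`; this is the coefficient condition of the hypothesis. The same
condition gives `β ≤ 1`, i.e. `‖f' - 1‖ < 1` on the disk, whence `f` is injective by the mean
value inequality. For `𝒢_q^m` the two sums are explicit negative binomial series.
-/

def normalizedSeries (a : ℕ → ℂ) (z : ℂ) : ℂ :=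
  z + ∑' n, a n * z ^ (n + 2)

lemma norm_natCast_add_two (n : ℕ) : ‖(n + 2 : ℂ)‖ = n + 2 := by
  exact_mod_cast Complex.norm_natCast (n + 2)

lemma mem_unitDisk {z : ℂ} : z ∈ unitDisk ↔ ‖z‖ < 1 :=
  mem_ball_zero_iff

section NormalizedSeries

variable {a b : ℕ → ℂ} {z : ℂ}

lemma summable_mul_pow_add (hb : Summable fun n => ‖b n‖) (hz : ‖z‖ ≤ 1) (k : ℕ) :
    Summable fun n => b n * z ^ (n + k) :=
  .of_norm_bounded hb fun n => by
    rw [norm_mul, norm_pow]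
    exact mul_le_of_le_one_right (norm_nonneg _) (pow_le_one₀ (norm_nonneg z) hz)

lemma norm_tsum_mul_pow_add_le (hb : Summable fun n => ‖b n‖) (hz : ‖z‖ ≤ 1) (k : ℕ) :
    ‖∑' n, b n * z ^ (n + k)‖ ≤ (∑' n, ‖b n‖) * ‖z‖ ^ k := by
  refine tsum_of_norm_bounded (hb.hasSum.mul_right (‖z‖ ^ k)) fun n => ?_
  rw [norm_mul, norm_pow]
  exact mul_le_mul_of_nonneg_left
    (pow_le_pow_of_le_one (norm_nonneg z) hz (Nat.le_add_left k n)) (norm_nonneg _)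

lemma summable_norm_of_summable_weighted (ha : Summable fun n : ℕ => (n + 2 : ℝ) * ‖a n‖) :
    Summable fun n => ‖a n‖ :=
  .of_nonneg_of_le (fun n => norm_nonneg _)
    (fun n => le_mul_of_one_le_left (norm_nonneg _) (by linarith [n.cast_nonneg (α := ℝ)])) ha

lemma hasDerivAt_normalizedSeries (ha : Summable fun n : ℕ => (n + 2 : ℝ) * ‖a n‖)
    (hz : ‖z‖ < 1) :
    HasDerivAt (normalizedSeries a) (1 + ∑' n : ℕ, (n + 2 : ℂ) * a n * z ^ (n + 1)) z := by
  have hterm (n : ℕ) (y : ℂ) :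
      HasDerivAt (fun w => a n * w ^ (n + 2)) ((n + 2 : ℂ) * a n * y ^ (n + 1)) y :=
    ((hasDerivAt_pow (n + 2) y).const_mul (a n)).congr_deriv (by push_cast; ring)
  refine (hasDerivAt_id z).add (hasDerivAt_tsum_of_isPreconnected ha Metric.isOpen_ball
    (convex_ball 0 1).isPreconnected (fun n y _ => hterm n y) (fun n y hy => ?_)
    (Metric.mem_ball_self one_pos) ?_ (mem_ball_zero_iff.2 hz))
  · rw [norm_mul, norm_mul, norm_pow, norm_natCast_add_two]
    exact mul_le_of_le_one_right (by positivity)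
      (pow_le_one₀ (norm_nonneg y) (mem_ball_zero_iff.1 hy).le)
  · simp

lemma mul_deriv_normalizedSeries_sub (ha : Summable fun n : ℕ => (n + 2 : ℝ) * ‖a n‖)
    (hz : ‖z‖ < 1) :
    z * deriv (normalizedSeries a) z - normalizedSeries a z
      = ∑' n : ℕ, (n + 1 : ℂ) * a n * z ^ (n + 2) := by
  have hsum := summable_mul_pow_add (summable_norm_of_summable_weighted ha) hz.le 2
  rw [(hasDerivAt_normalizedSeries ha hz).deriv, normalizedSeries, mul_add, mul_one,
    ← tsum_mul_left, add_sub_add_left_eq_sub, ← Summable.tsum_sub ?_ hsum]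
  · congr 1 with n
    ring
  · refine (summable_mul_pow_add (b := fun n : ℕ => (n + 2 : ℂ) * a n) ?_ hz.le 2).congr
      fun n => ?_
    · simpa only [norm_mul, norm_natCast_add_two] using ha
    · ring

lemma injOn_normalizedSeries {β : ℝ} (hβ : HasSum (fun n : ℕ => (n + 2 : ℝ) * ‖a n‖) β)
    (hβ1 : β ≤ 1) : InjOn (normalizedSeries a) unitDisk := by
  intro z₁ hz₁ z₂ hz₂ heq
  rw [mem_unitDisk] at hz₁ hz₂
  set r := max ‖z₁‖ ‖z₂‖
  have hr : r < 1 := max_lt hz₁ hz₂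
  have hb : Summable fun n : ℕ => ‖(n + 2 : ℂ) * a n‖ := by
    simpa only [norm_mul, norm_natCast_add_two] using hβ.summable
  have hb_sum : ∑' n : ℕ, ‖(n + 2 : ℂ) * a n‖ = β := by
    simpa only [norm_mul, norm_natCast_add_two] using hβ.tsum_eq
  have hderiv (w : ℂ) (hw : w ∈ Metric.closedBall 0 r) :
      HasDerivAt (fun z => normalizedSeries a z - z)
        (∑' n : ℕ, (n + 2 : ℂ) * a n * w ^ (n + 1)) w := by
    have hw1 : ‖w‖ < 1 := (mem_closedBall_zero_iff.1 hw).trans_lt hr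
    exact ((hasDerivAt_normalizedSeries hβ.summable hw1).sub (hasDerivAt_id' w)).congr_deriv
      (add_sub_cancel_left _ _)
  have hbound (w : ℂ) (hw : w ∈ Metric.closedBall 0 r) :
      ‖∑' n : ℕ, (n + 2 : ℂ) * a n * w ^ (n + 1)‖ ≤ β * r := by
    have hwr := mem_closedBall_zero_iff.1 hw
    have := norm_tsum_mul_pow_add_le hb (hwr.trans hr.le) 1
    rw [hb_sum, pow_one] at this
    exact this.trans (mul_le_mul_of_nonneg_left hwr (hβ.nonneg fun n => by positivity))
  have hlip := (convex_closedBall (0 : ℂ) r).norm_image_sub_le_of_norm_hasDerivWithin_le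
    (fun w hw => (hderiv w hw).hasDerivWithinAt) hbound
    (mem_closedBall_zero_iff.2 (le_max_right _ _)) (mem_closedBall_zero_iff.2 (le_max_left _ _))
  rw [heq, sub_sub_sub_cancel_left, norm_sub_rev z₁] at hlip
  have hβr : β * r < 1 := by nlinarith [norm_nonneg z₁, le_max_left ‖z₁‖ ‖z₂‖]
  have : ‖z₂ - z₁‖ = 0 := by nlinarith [norm_nonneg (z₂ - z₁)]
  exact (sub_eq_zero.1 (norm_eq_zero.1 this)).symm

lemma norm_sub_mul_sq_le_norm_normalizedSeries {α : ℝ} (hα : HasSum (fun n => ‖a n‖) α)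
    (hz : ‖z‖ ≤ 1) : ‖z‖ - α * ‖z‖ ^ 2 ≤ ‖normalizedSeries a z‖ := by
  have htail := norm_tsum_mul_pow_add_le hα.summable hz 2
  rw [hα.tsum_eq] at htail
  have := norm_sub_norm_le z (-∑' n, a n * z ^ (n + 2))
  rw [sub_neg_eq_add, norm_neg] at this
  exact (sub_le_sub_left htail _).trans this

lemma norm_mul_deriv_sub_normalizedSeries_le {α β : ℝ} (hα : HasSum (fun n => ‖a n‖) α)
    (hβ : HasSum (fun n : ℕ => (n + 2 : ℝ) * ‖a n‖) β) (hz : ‖z‖ < 1) :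
    ‖z * deriv (normalizedSeries a) z - normalizedSeries a z‖ ≤ (β - α) * ‖z‖ ^ 2 := by
  have hb : HasSum (fun n : ℕ => ‖(n + 1 : ℂ) * a n‖) (β - α) := by
    refine (hβ.sub hα).congr_fun fun n => ?_
    rw [norm_mul, ← Nat.cast_succ, Complex.norm_natCast]
    push_cast
    ring
  rw [mul_deriv_normalizedSeries_sub hβ.summable hz, ← hb.tsum_eq]
  exact norm_tsum_mul_pow_add_le hb.summable hz.le 2

end NormalizedSeries

lemma lt_re_exp_mul_div_of_norm_sub_lt {ξ γ : ℝ} {u v : ℂ}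
    (h : ‖u - v‖ < (1 - γ) * Real.cos ξ * ‖v‖) :
    γ * Real.cos ξ < (Complex.exp (Complex.I * ξ) * u / v).re := by
  have hv : v ≠ 0 := by
    rintro rfl
    rw [norm_zero, mul_zero] at h
    exact (norm_nonneg _).not_gt h
  set e := Complex.exp (ξ * Complex.I)
  have hsplit : Complex.exp (Complex.I * ξ) * u / v = e + e * (u - v) / v := by
    rw [mul_comm Complex.I]
    field_simp
    ring
  have hre := Complex.abs_re_le_norm (e * (u - v) / v)
  rw [norm_div, norm_mul, Complex.norm_exp_ofReal_mul_I, one_mul] at hre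
  rw [hsplit, Complex.add_re, Complex.exp_ofReal_mul_I_re]
  have hratio := (div_lt_iff₀ (norm_pos_iff.2 hv)).2 h
  linarith [neg_abs_le (e * (u - v) / v).re]

theorem spiralS0_normalizedSeries {a : ℕ → ℂ} {α β ξ γ : ℝ}
    (hα : HasSum (fun n => ‖a n‖) α)
    (hβ : HasSum (fun n : ℕ => (n + 2 : ℝ) * ‖a n‖) β)
    (hξ : |ξ| < π / 2) (hγ0 : 0 ≤ γ) (hγ1 : γ < 1)
    (h : (Real.cos ξ)⁻¹ * β + (1 - γ - (Real.cos ξ)⁻¹) * α ≤ 1 - γ) :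
    SpiralS0 ξ γ (normalizedSeries a) := by
  set c := Real.cos ξ
  have hc : 0 < c := Real.cos_pos_of_mem_Ioo (abs_lt.1 hξ)
  have hpos : 0 < (1 - γ) * c := mul_pos (by linarith) hc
  have hαβ : α ≤ β :=
    hasSum_le (fun n => le_mul_of_one_le_left (norm_nonneg _)
      (by linarith [n.cast_nonneg (α := ℝ)])) hα hβ
  have hkey : β - α + (1 - γ) * c * α ≤ (1 - γ) * c := by
    have := mul_le_mul_of_nonneg_left h hc.le
    field_simp at this
    linarith
  have hα1 : α ≤ 1 := le_of_mul_le_mul_left (by linarith) hpos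
  have hβ1 : β ≤ 1 := by
    have : (1 - γ) * c ≤ 1 := by nlinarith [Real.cos_le_one ξ]
    nlinarith [mul_le_mul_of_nonneg_right this (sub_nonneg.2 hα1)]
  have hderiv (z : ℂ) (hz : ‖z‖ < 1) := hasDerivAt_normalizedSeries hβ.summable hz
  refine ⟨⟨?_, by simp [normalizedSeries], by rw [(hderiv 0 (by simp)).deriv]; simp⟩,
    injOn_normalizedSeries hβ hβ1, fun z hz hz0 => ?_⟩
  · exact DifferentiableOn.analyticOn
      (fun z hz => (hderiv z (mem_unitDisk.1 hz)).differentiableAt.differentiableWithinAt)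
      Metric.isOpen_ball
  rw [mem_unitDisk] at hz
  have hf := norm_sub_mul_sq_le_norm_normalizedSeries hα hz.le
  have hd := norm_mul_deriv_sub_normalizedSeries_le hα hβ hz
  have hz_pos : 0 < ‖z‖ := norm_pos_iff.2 hz0
  have hlt : ‖z * deriv (normalizedSeries a) z - normalizedSeries a z‖
      < (1 - γ) * c * ‖normalizedSeries a z‖ :=
    calc _ ≤ (β - α) * ‖z‖ ^ 2 := hd
      _ < (1 - γ) * c * (‖z‖ - α * ‖z‖ ^ 2) := by
        have hsq : ‖z‖ ^ 2 < ‖z‖ := by nlinarith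
        nlinarith [mul_le_mul_of_nonneg_left hkey (sq_nonneg ‖z‖),
          mul_lt_mul_of_pos_left hsq hpos]
      _ ≤ _ := mul_le_mul_of_nonneg_left hf hpos.le
  refine ⟨fun h0 => ?_, lt_re_exp_mul_div_of_norm_sub_lt hlt⟩
  rw [h0, norm_zero, mul_zero] at hlt
  exact (norm_nonneg _).not_gt hlt

-- the coefficient of `z ^ (n + 2)` in `Θ_q^m`
def pascalWeight (m : ℕ) (q : ℝ) (n : ℕ) : ℝ :=
  ((n + m).choose (m - 1) : ℝ) * q ^ (n + 1) * (1 - q) ^ m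

lemma pascalWeight_nonneg (m : ℕ) {q : ℝ} (hq0 : 0 ≤ q) (hq1 : q ≤ 1) (n : ℕ) :
    0 ≤ pascalWeight m q n := by
  have : 0 ≤ 1 - q := by linarith
  unfold pascalWeight
  positivity

lemma pascalG_eq_normalizedSeries (m : ℕ) (q : ℝ) :
    pascalG m q = normalizedSeries fun n => ((pascalWeight m q n / (n + 2) : ℝ) : ℂ) := by
  funext z
  simp only [pascalG, normalizedSeries, pascalWeight]
  congr 1
  refine tsum_congr fun n => ?_
  push_cast
  ring

lemma hasSum_choose_mul_pow_add (k s : ℕ) {q : ℝ} (hq : |q| < 1) :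
    HasSum (fun n => ((n + s + k).choose k : ℝ) * q ^ (n + s))
      (1 / (1 - q) ^ (k + 1) - ∑ j ∈ Finset.range s, ((j + k).choose k : ℝ) * q ^ j) :=
  (hasSum_nat_add_iff' s).2
    (hasSum_choose_mul_geometric_of_norm_lt_one k (by rwa [Real.norm_eq_abs]))

lemma hasSum_pascalWeight {m : ℕ} (hm : 1 ≤ m) {q : ℝ} (hq : |q| < 1) :
    HasSum (pascalWeight m q) (1 - (1 - q) ^ m) := by
  obtain ⟨k, rfl⟩ : ∃ k, m = k + 1 := ⟨m - 1, by omega⟩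
  have hq1 : (1 - q) ^ (k + 1) ≠ 0 := pow_ne_zero _ (by linarith [(abs_lt.1 hq).2])
  have := (hasSum_choose_mul_pow_add k 1 hq).mul_right ((1 - q) ^ (k + 1))
  rw [Finset.sum_range_one, zero_add, Nat.choose_self, Nat.cast_one, pow_zero, mul_one,
    sub_mul, one_div, inv_mul_cancel₀ hq1, one_mul] at this
  refine this.congr_fun fun n => ?_
  rw [pascalWeight, add_tsub_cancel_right, add_comm k 1, ← add_assoc]

lemma hasSum_pascalWeight_div {m : ℕ} (hm : 2 ≤ m) {q : ℝ} (hq : |q| < 1) (hq0 : q ≠ 0) :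
    HasSum (fun n : ℕ => pascalWeight m q n / (n + 2))
      (((1 - q) - (1 - q) ^ m - q * ((m : ℝ) - 1) * (1 - q) ^ m) / (q * ((m : ℝ) - 1))) := by
  obtain ⟨k, rfl⟩ : ∃ k, m = k + 2 := ⟨m - 2, by omega⟩
  have hq1 : 1 - q ≠ 0 := by linarith [(abs_lt.1 hq).2]
  have hk : (k : ℝ) + 1 ≠ 0 := by positivity
  have hchoose (n : ℕ) :
      ((n + (k + 2)).choose (k + 1) : ℝ) = ((n + 2 + k).choose k : ℝ) * (n + 2) / (k + 1) := by
    have := Nat.choose_succ_right_eq (n + (k + 2)) k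
    rw [show n + (k + 2) - k = n + 2 by omega] at this
    rw [eq_div_iff hk, show n + 2 + k = n + (k + 2) by omega]
    exact_mod_cast this
  have := (hasSum_choose_mul_pow_add k 2 hq).mul_right ((1 - q) ^ (k + 2) / (q * (k + 1)))
  have hsum : (1 / (1 - q) ^ (k + 1) - ∑ j ∈ Finset.range 2, ((j + k).choose k : ℝ) * q ^ j)
      * ((1 - q) ^ (k + 2) / (q * (k + 1)))
      = ((1 - q) - (1 - q) ^ (k + 2) - q * (((k + 2 : ℕ) : ℝ) - 1) * (1 - q) ^ (k + 2))
        / (q * (((k + 2 : ℕ) : ℝ) - 1)) := by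
    rw [Finset.sum_range_succ, Finset.sum_range_one, zero_add, Nat.choose_self,
      add_comm 1 k, Nat.choose_succ_self_right,
      show ((k + 2 : ℕ) : ℝ) - 1 = k + 1 by push_cast; ring]
    push_cast
    rw [pow_succ (1 - q) (k + 1)]
    field_simp
    ring
  rw [hsum] at this
  refine this.congr_fun fun n => ?_
  rw [pascalWeight, show k + 2 - 1 = k + 1 by omega, hchoose]
  field_simp
  ring

/-- Corollary 6, `𝒢_q^m ∈ 𝒮(ξ, γ)`. -/
theorem stmt16 (m : ℕ) (hm : 2 ≤ m) (q : ℝ) (hq0 : 0 < q) (hq1 : q < 1)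
    (ξ γ : ℝ) (hξ : |ξ| < π / 2) (hγ0 : 0 ≤ γ) (hγ1 : γ < 1)
    (h : (Real.cos ξ)⁻¹ * (1 - (1 - q) ^ m)
        + (1 - γ - (Real.cos ξ)⁻¹) / (q * ((m : ℝ) - 1)) *
            ((1 - q) - (1 - q) ^ m - q * ((m : ℝ) - 1) * (1 - q) ^ m) ≤ 1 - γ) :
    SpiralS0 ξ γ (pascalG m q) := by
  have hq : |q| < 1 := abs_lt.2 ⟨by linarith, hq1⟩
  have hnorm (n : ℕ) :
      ‖((pascalWeight m q n / (n + 2) : ℝ) : ℂ)‖ = pascalWeight m q n / (n + 2) :=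
    Complex.norm_of_nonneg (by have := pascalWeight_nonneg m hq0.le hq1.le n; positivity)
  rw [pascalG_eq_normalizedSeries]
  refine spiralS0_normalizedSeries (hasSum_pascalWeight_div hm hq hq0.ne' |>.congr_fun hnorm)
    ((hasSum_pascalWeight (m := m) (by omega) hq).congr_fun fun n => ?_) hξ hγ0 hγ1
    (h.trans_eq' (by ring))
  rw [hnorm]
  field_simp
end
end
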